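/- Let A be a C*-algebra and ω a bounded linear functional on A with polar decomposition ω = u.|ω|_r in A** (u a partial isometry with u*u the support of |ω|_r). Define |ω|_l = u.|ω|_r.u*. Then |ω|_l is a positive functional with ‖|ω|_l‖ = ‖ω‖, ω = |ω|_l.u, and |ω|_l = ω.u*. -/

import Mathlib

open scoped ComplexOrder

/-! Both `ω = |ω|_l.u` (where the support property of `u*u` enters) and `|ω|_l = ω.u*` are
compositions with left multiplications. Since `u*u` is a projection, `‖u‖ ≤ 1`, so each of the
two functionals bounds the norm of the other. -/

theorem IsStarProjection.star_mul_self_of_mul_star_mul_self {R : Type*} [Semigroup R] [StarMul R]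
    {u : R} (hu : u * star u * u = u) : IsStarProjection (star u * u) where
  isIdempotentElem := by rw [IsIdempotentElem, mul_assoc (star u), ← mul_assoc u, hu]
  isSelfAdjoint := .star_mul_self u

theorem norm_le_one_of_mul_star_mul_self {E : Type*} [NonUnitalNormedRing E] [StarRing E]
    [CStarRing E] {u : E} (hu : u * star u * u = u) : ‖u‖ ≤ 1 := by
  have h := (IsStarProjection.star_mul_self_of_mul_star_mul_self hu).norm_le
  rw [CStarRing.norm_star_mul_self] at h
  nlinarith [norm_nonneg u]

theorem ContinuousLinearMap.norm_comp_mul_le_of_norm_le_one {𝕜 A F : Type*}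
    [NontriviallyNormedField 𝕜] [NonUnitalNormedRing A] [NormedSpace 𝕜 A]
    [IsScalarTower 𝕜 A A] [SMulCommClass 𝕜 A A] [SeminormedAddCommGroup F] [NormedSpace 𝕜 F]
    (f : A →L[𝕜] F) {a : A} (ha : ‖a‖ ≤ 1) :
    ‖f.comp (mul 𝕜 A a)‖ ≤ ‖f‖ :=
  (opNorm_comp_le _ _).trans <|
    mul_le_of_le_one_right (norm_nonneg f) ((opNorm_mul_apply_le 𝕜 A a).trans ha)

theorem stmt17_general {M : Type*} [NormedRing M] [StarRing M] [CStarRing M]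
    [NormedAlgebra ℂ M]
    (φ : M →L[ℂ] ℂ) (hpos : ∀ a : M, 0 ≤ φ (star a * a))
    (u : M) (hpi : u * star u * u = u)
    (hsupp : ∀ x : M, φ (star u * u * x) = φ x ∧ φ (x * (star u * u)) = φ x) :
    ∀ (ω ωl : M →L[ℂ] ℂ),
      ω = φ.comp ((ContinuousLinearMap.mul ℂ M).flip u) →
      ωl = φ.comp (((ContinuousLinearMap.mul ℂ M).flip u).comp
        ((ContinuousLinearMap.mul ℂ M) (star u))) →
      (∀ a : M, 0 ≤ ωl (star a * a)) ∧ ‖ωl‖ = ‖ω‖ ∧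
      (∀ x : M, ω x = ωl (u * x)) ∧ (∀ x : M, ωl x = ω (star u * x)) := by
  intro ω ωl hω hωl
  have h_left : ω = ωl.comp (ContinuousLinearMap.mul ℂ M u) := by
    ext x
    simp only [hω, hωl, ContinuousLinearMap.comp_apply, ContinuousLinearMap.flip_apply,
      ContinuousLinearMap.mul_apply']
    rw [← (hsupp (x * u)).1]
    simp only [mul_assoc]
  have h_right : ωl = ω.comp (ContinuousLinearMap.mul ℂ M (star u)) := by
    ext x
    simp [hω, hωl, mul_assoc]
  have hu : ‖u‖ ≤ 1 := norm_le_one_of_mul_star_mul_self hpi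
  refine ⟨fun a => ?_, le_antisymm ?_ ?_, fun x => congr($h_left x), fun x => congr($h_right x)⟩
  · simpa [hωl, ← mul_assoc] using hpos (a * u)
  · rw [h_right]
    exact ω.norm_comp_mul_le_of_norm_le_one (by rwa [norm_star])
  · rw [h_left]
    exact ωl.norm_comp_mul_le_of_norm_le_one hu

/-- Polar decomposition of a functional. Let `φ = |ω|_r` be a
positive functional on a (unital) C*-algebra `M` (playing the role of `A**`),
and `u` a partial isometry such that `u*u` acts as the support of `φ` (a unit
for `φ`). Put `ω := φ(· u)` (i.e. `ω = u.|ω|_r`) and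
`ωl := φ(u* · u)` (i.e. `|ω|_l = u.|ω|_r.u*`). Then `|ω|_l` is positive with
`‖|ω|_l‖ = ‖ω‖`, `ω = |ω|_l.u` (i.e. `ω(x) = |ω|_l(ux)`) and `|ω|_l = ω.u*`
(i.e. `|ω|_l(x) = ω(u* x)`). -/
theorem stmt17 {M : Type*} [NormedRing M] [StarRing M] [CStarRing M]
    [NormedAlgebra ℂ M] [CompleteSpace M] [StarModule ℂ M]
    (φ : M →L[ℂ] ℂ) (hpos : ∀ a : M, 0 ≤ φ (star a * a))
    (u : M) (hpi : u * star u * u = u)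
    (hsupp : ∀ x : M, φ (star u * u * x) = φ x ∧ φ (x * (star u * u)) = φ x) :
    ∀ (ω ωl : M →L[ℂ] ℂ),
      ω = φ.comp ((ContinuousLinearMap.mul ℂ M).flip u) →
      ωl = φ.comp (((ContinuousLinearMap.mul ℂ M).flip u).comp
        ((ContinuousLinearMap.mul ℂ M) (star u))) →
      (∀ a : M, 0 ≤ ωl (star a * a)) ∧ ‖ωl‖ = ‖ω‖ ∧
      (∀ x : M, ω x = ωl (u * x)) ∧ (∀ x : M, ωl x = ω (star u * x)) :=
  stmt17_general φ hpos u hpi hsupp
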